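/- arXiv:2202.00081 — 6 statements merged into one kernel-verified Lean document; each statement's English description precedes it below -/
import Mathlib

section
/- Let 0 < γ < 1 and let (X_t)_{t≥0} be i.i.d. real-valued random variables with E[log⁺|X_0|] < ∞. Then the series ∑_{t=0}^∞ γ^t X_t converges absolutely almost surely. -/
open MeasureTheory ProbabilityTheory Filter

/-- `log⁺ x = max (log x) 0`. -/
noncomputable def posLog (x : ℝ) : ℝ := max (Real.log x) 0

/-!
By the first Borel–Cantelli lemma, an integrable sequence of identically distributed random
variables satisfies `Y_t ≤ c t` eventually, almost surely, for every `c > 0`: the tail sum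
`∑ ℙ(|Y_0| > c t)` is finite. Applied to `log⁺ |X_t|` with `c = -log γ / 2`, this gives
`γ^t |X_t| ≤ (γ e^c)^t = γ^(t/2)` eventually, so the series is dominated by a geometric one.
-/

theorem measurable_posLog : Measurable posLog :=
  Real.measurable_log.max measurable_const

theorem le_exp_posLog (x : ℝ) : x ≤ Real.exp (posLog x) :=
  (Real.le_exp_log x).trans (Real.exp_le_exp.2 (le_max_left _ _))

theorem summable_pow_mul_abs_of_eventually_posLog_le {γ c : ℝ} (hγ : 0 ≤ γ)
    (hr : γ * Real.exp c < 1) {x : ℕ → ℝ} (h : ∀ᶠ t in atTop, posLog |x t| ≤ c * t) :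
    Summable fun t => γ ^ t * |x t| := by
  refine .of_norm_bounded_eventually_nat (summable_geometric_of_lt_one (by positivity) hr) ?_
  filter_upwards [h] with t ht
  calc ‖γ ^ t * |x t|‖ = γ ^ t * |x t| := by rw [Real.norm_of_nonneg (by positivity)]
    _ ≤ γ ^ t * Real.exp (c * t) :=
      mul_le_mul_of_nonneg_left ((le_exp_posLog _).trans (Real.exp_le_exp.2 ht)) (by positivity)
    _ = (γ * Real.exp c) ^ t := by rw [mul_pow, ← Real.exp_nat_mul, mul_comm c]

theorem ae_eventually_le_mul_of_identDistrib {Ω : Type*} [MeasureSpace Ω]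
    [IsProbabilityMeasure (ℙ : Measure Ω)] {Y : ℕ → Ω → ℝ}
    (hident : ∀ t, IdentDistrib (Y t) (Y 0) ℙ ℙ) (hint : Integrable (Y 0)) {c : ℝ} (hc : 0 < c) :
    ∀ᵐ ω ∂(ℙ : Measure Ω), ∀ᶠ t in atTop, Y t ω ≤ c * t := by
  have hmeas (t : ℕ) : MeasurableSet {y : ℝ | |y| / c ∈ Set.Ioi (t : ℝ)} :=
    (measurable_abs.div_const c) measurableSet_Ioi
  have hsum : ∑' t : ℕ, ℙ {ω | |Y t ω| / c ∈ Set.Ioi (t : ℝ)} ≠ ⊤ :=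
    ((tsum_congr fun t => (hident t).measure_mem_eq (hmeas t)).trans_lt
      (tsum_prob_mem_Ioi_lt_top (hint.abs.div_const c) fun ω => by positivity)).ne
  filter_upwards [ae_eventually_notMem hsum] with ω hω
  filter_upwards [hω] with t ht
  have ht' : |Y t ω| / c ≤ t := not_lt.1 ht
  rw [div_le_iff₀ hc] at ht'
  linarith [le_abs_self (Y t ω)]

theorem stmt0_general
    {Ω : Type*} [MeasureSpace Ω] [IsProbabilityMeasure (ℙ : Measure Ω)]
    (γ : ℝ) (hγ0 : 0 < γ) (hγ1 : γ < 1)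
    (X : ℕ → Ω → ℝ)
    (hident : ∀ t, IdentDistrib (X t) (X 0) ℙ ℙ)
    (hlog : Integrable (fun ω => posLog |X 0 ω|) ℙ) :
    ∀ᵐ ω ∂(ℙ : Measure Ω), Summable (fun t => γ ^ t * |X t ω|) := by
  have hlogγ : Real.log γ < 0 := Real.log_neg hγ0 hγ1
  have hc : 0 < -Real.log γ / 2 := by linarith
  have hr : γ * Real.exp (-Real.log γ / 2) < 1 := by
    rw [← Real.exp_log hγ0, ← Real.exp_add, Real.log_exp]
    exact Real.exp_lt_one_iff.2 (by linarith)
  have hident' (t : ℕ) : IdentDistrib (fun ω => posLog |X t ω|) (fun ω => posLog |X 0 ω|) ℙ ℙ :=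
    (hident t).comp (measurable_posLog.comp measurable_abs)
  filter_upwards [ae_eventually_le_mul_of_identDistrib hident' hlog hc] with ω hω
  exact summable_pow_mul_abs_of_eventually_posLog_le hγ0.le hr hω

theorem stmt0
    {Ω : Type*} [MeasureSpace Ω] [IsProbabilityMeasure (ℙ : Measure Ω)]
    (γ : ℝ) (hγ0 : 0 < γ) (hγ1 : γ < 1)
    (X : ℕ → Ω → ℝ) (hmeas : ∀ t, Measurable (X t))
    (hindep : iIndepFun X ℙ)
    (hident : ∀ t, IdentDistrib (X t) (X 0) ℙ ℙ)
    (hlog : Integrable (fun ω => posLog |X 0 ω|) ℙ) :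
    ∀ᵐ ω ∂(ℙ : Measure Ω), Summable (fun t => γ ^ t * |X t ω|) :=
  stmt0_general γ hγ0 hγ1 X hident hlog
end

section
/- Let 0 < γ < 1 and let (X_t)_{t≥0} be i.i.d. real-valued random variables with E[log⁺|X_0|] = ∞. Then the series ∑_{t=0}^∞ γ^t X_t diverges almost surely (i.e., the partial sums almost surely fail to converge to a finite limit). -/
/-!
If the partial sums converge then `γ ^ n * X n → 0`, so it suffices that `|X n| > γ⁻¹ ^ n`
infinitely often almost surely. These events are independent, and by identical distribution
their probabilities are `ℙ (log⁺ |X 0| > n log γ⁻¹)`, whose sum dominates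
`𝔼[log⁺ |X 0|] / log γ⁻¹ = ∞`; the second Borel–Cantelli lemma concludes.
-/

open MeasureTheory ProbabilityTheory Filter

theorem ENNReal.ofReal_le_tsum_ite_natCast_lt (x : ℝ) :
    ENNReal.ofReal x ≤ ∑' n : ℕ, if (n : ℝ) < x then 1 else 0 :=
  calc ENNReal.ofReal x ≤ ⌈x⌉₊ := by
        simpa only [ENNReal.ofReal_natCast] using ENNReal.ofReal_le_ofReal (Nat.le_ceil x)
    _ = ∑ n ∈ Finset.range ⌈x⌉₊, if (n : ℝ) < x then 1 else 0 := by
        rw [Finset.sum_congr rfl fun n hn => if_pos (Nat.lt_ceil.mp (Finset.mem_range.mp hn))]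
        simp
    _ ≤ _ := ENNReal.sum_le_tsum _

theorem lintegral_ofReal_le_tsum_measure_lt {Ω : Type*} [MeasurableSpace Ω] (μ : Measure Ω)
    {g : Ω → ℝ} (hg : Measurable g) :
    ∫⁻ ω, ENNReal.ofReal (g ω) ∂μ ≤ ∑' n : ℕ, μ {ω | (n : ℝ) < g ω} := by
  have hs (n : ℕ) : MeasurableSet {ω | (n : ℝ) < g ω} := measurableSet_lt measurable_const hg
  calc ∫⁻ ω, ENNReal.ofReal (g ω) ∂μ
      ≤ ∫⁻ ω, ∑' n : ℕ, {ω | (n : ℝ) < g ω}.indicator 1 ω ∂μ :=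
        lintegral_mono fun ω => by
          simpa only [Set.indicator_apply, Set.mem_ofPred_eq, Pi.one_apply]
            using ENNReal.ofReal_le_tsum_ite_natCast_lt (g ω)
    _ = ∑' n : ℕ, μ {ω | (n : ℝ) < g ω} := by
        rw [lintegral_tsum fun n => (measurable_one.indicator (hs n)).aemeasurable]
        simp only [lintegral_indicator_one (hs _)]

theorem tsum_measure_natCast_mul_lt_eq_top {Ω : Type*} [MeasurableSpace Ω] {μ : Measure Ω}
    {g : Ω → ℝ} (hg : Measurable g) {c : ℝ} (hc : 0 < c)
    (h : ∫⁻ ω, ENNReal.ofReal (g ω) ∂μ = ⊤) :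
    ∑' n : ℕ, μ {ω | n * c < g ω} = ⊤ := by
  have hdiv : ∫⁻ ω, ENNReal.ofReal (g ω / c) ∂μ = ⊤ := by
    simp_rw [ENNReal.ofReal_div_of_pos hc, div_eq_mul_inv]
    rw [lintegral_mul_const _ hg.ennreal_ofReal, h, ENNReal.top_mul]
    exact ENNReal.inv_ne_zero.mpr ENNReal.ofReal_ne_top
  have hle := lintegral_ofReal_le_tsum_measure_lt μ (hg.div_const c)
  simp only [hdiv, top_le_iff, lt_div_iff₀ hc] at hle
  exact hle

theorem exp_lt_of_lt_posLog {a x : ℝ} (ha : 0 ≤ a) (hx : 0 ≤ x) (h : a < posLog x) :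
    Real.exp a < x := by
  have hlog : a < Real.log x := (lt_max_iff.mp h).resolve_right ha.not_gt
  have hx1 : 1 < x := (Real.log_pos_iff hx).mp (ha.trans_lt hlog)
  exact (Real.lt_log_iff_exp_lt (zero_lt_one.trans hx1)).mp hlog

theorem one_lt_pow_mul_of_natCast_mul_log_inv_lt_posLog {γ x : ℝ} (hγ0 : 0 < γ)
    (hγ1 : γ ≤ 1) (hx : 0 ≤ x) {n : ℕ} (h : n * Real.log γ⁻¹ < posLog x) : 1 < γ ^ n * x := by
  have hc : 0 ≤ Real.log γ⁻¹ := Real.log_nonneg (one_le_inv_iff₀.mpr ⟨hγ0, hγ1⟩)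
  have hlt := exp_lt_of_lt_posLog (by positivity) hx h
  rw [Real.exp_nat_mul, Real.exp_log (inv_pos.mpr hγ0), inv_pow] at hlt
  rwa [inv_lt_iff_one_lt_mul₀' (by positivity)] at hlt

theorem ProbabilityTheory.iIndepFun.ae_frequently_mem_of_tsum_eq_top {Ω β : Type*}
    [MeasurableSpace Ω] [MeasurableSpace β] {μ : Measure Ω} {X : ℕ → Ω → β}
    (hmeas : ∀ n, Measurable (X n))
    (hindep : iIndepFun X μ) {B : ℕ → Set β} (hB : ∀ n, MeasurableSet (B n))
    (hsum : ∑' n, μ (X n ⁻¹' B n) = ⊤) :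
    ∀ᵐ ω ∂μ, ∃ᶠ n in atTop, X n ω ∈ B n := by
  have := hindep.isProbabilityMeasure
  have hs (n : ℕ) : MeasurableSet (X n ⁻¹' B n) := hmeas n (hB n)
  have hiind : iIndepSet (fun n => X n ⁻¹' B n) μ :=
    (iIndepSet_iff_meas_biInter hs).mpr fun S =>
      hindep.measure_inter_preimage_eq_mul S fun n _ => hB n
  have hlimsup := measure_limsup_eq_one hs hiind hsum
  rw [← measure_univ (μ := μ)] at hlimsup
  filter_upwards [(ae_iff_measure_eq (MeasurableSet.measurableSet_limsup hs).nullMeasurableSet).mpr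
    hlimsup] with ω hω
  exact mem_limsup_iff_frequently_mem.mp hω

theorem tendsto_zero_of_tendsto_sum_range {G : Type*} [AddCommGroup G] [TopologicalSpace G]
    [IsTopologicalAddGroup G] {f : ℕ → G} {l : G}
    (h : Tendsto (fun n => ∑ i ∈ Finset.range n, f i) atTop (nhds l)) :
    Tendsto f atTop (nhds 0) := by
  simpa only [Function.comp_def, Finset.sum_range_succ_sub_sum, sub_self] using
    (h.comp (tendsto_add_atTop_nat 1)).sub h

theorem stmt1
    {Ω : Type*} [MeasureSpace Ω] [IsProbabilityMeasure (ℙ : Measure Ω)]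
    (γ : ℝ) (hγ0 : 0 < γ) (hγ1 : γ < 1)
    (X : ℕ → Ω → ℝ) (hmeas : ∀ t, Measurable (X t))
    (hindep : iIndepFun X ℙ)
    (hident : ∀ t, IdentDistrib (X t) (X 0) ℙ ℙ)
    (hlog : ∫⁻ ω, ENNReal.ofReal (posLog |X 0 ω|) ∂(ℙ : Measure Ω) = ⊤) :
    ∀ᵐ ω ∂(ℙ : Measure Ω),
      ¬ ∃ l : ℝ, Tendsto (fun n => ∑ t ∈ Finset.range n, γ ^ t * X t ω) atTop (nhds l) := by
  have hc : 0 < Real.log γ⁻¹ := Real.log_pos (one_lt_inv_iff₀.mpr ⟨hγ0, hγ1⟩)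
  have hposLog : Measurable fun ω => posLog |X 0 ω| := (hmeas 0).abs.log.max measurable_const
  let B (n : ℕ) : Set ℝ := {x | 1 < γ ^ n * |x|}
  have hB (n : ℕ) : MeasurableSet (B n) :=
    measurableSet_lt measurable_const (measurable_const.mul measurable_abs)
  have hsum : ∑' n, ℙ (X n ⁻¹' B n) = ⊤ := by
    refine top_le_iff.mp <| (tsum_measure_natCast_mul_lt_eq_top hposLog hc hlog).ge.trans <|
      ENNReal.tsum_le_tsum fun n => ?_
    rw [(hident n).measure_mem_eq (hB n)]
    exact measure_mono fun ω =>
      one_lt_pow_mul_of_natCast_mul_log_inv_lt_posLog hγ0 hγ1.le (abs_nonneg _)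
  filter_upwards [hindep.ae_frequently_mem_of_tsum_eq_top hmeas hB hsum] with ω hfreq
  rintro ⟨l, hl⟩
  have hterm := (tendsto_zero_of_tendsto_sum_range hl).abs
  rw [abs_zero] at hterm
  have hsmall : ∀ᶠ n in atTop, |γ ^ n * X n ω| < 1 := hterm.eventually_lt_const one_pos
  obtain ⟨n, hbig, hlt⟩ := (hfreq.and_eventually hsmall).exists
  rw [abs_mul, abs_of_pos (pow_pos hγ0 n)] at hlt
  exact hlt.not_gt hbig
end

section
/- Let 0 < γ < 1, β > 0 and let (X_t)_{t≥0} be independent real-valued random variables such that there is a constant c(β) < ∞ with E[exp(β|X_t|)] ≤ c(β) for all t. Then the series S = ∑_{t=0}^∞ γ^t X_t converges absolutely almost surely and E[exp(β|S|)] ≤ c(β)^{1/(1-γ)} < ∞. -/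
open MeasureTheory ProbabilityTheory Filter Finset Real
open scoped ENNReal

/-!
Write `Y_t = γ^t β |X_t|`. By independence, `E[exp(Y_0 + ⋯ + Y_{n-1})] = ∏_{t<n} E[exp Y_t]`, and by
Jensen for the concave map `x ↦ x^{γ^t}` each factor is at most `c(β)^{γ^t}`, so the product is at
most `c(β)^{∑ γ^t} ≤ c(β)^{1/(1-γ)}`. By monotone convergence the same bound holds for
`E[sup_n exp(Y_0 + ⋯ + Y_{n-1})]`; this supremum is therefore a.s. finite, which gives absolute
convergence of the series, and it dominates `exp(β|S|)`.
-/

lemma lintegral_rpow_le_rpow_lintegral {α : Type*} [MeasurableSpace α] {μ : Measure α}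
    [IsProbabilityMeasure μ] {f : α → ℝ≥0∞} (hf : AEMeasurable f μ) {p : ℝ} (hp0 : 0 ≤ p)
    (hp1 : p ≤ 1) : ∫⁻ a, f a ^ p ∂μ ≤ (∫⁻ a, f a ∂μ) ^ p := by
  simpa using ENNReal.lintegral_mul_norm_pow_le hf (aemeasurable_const (b := (1 : ℝ≥0∞)))
    hp0 (sub_nonneg.2 hp1) (add_sub_cancel p 1)

lemma lintegral_ofReal_exp_mul_le_rpow {α : Type*} [MeasurableSpace α] {μ : Measure α}
    [IsProbabilityMeasure μ] {Z : α → ℝ} (hZ : AEMeasurable Z μ) {p : ℝ} (hp0 : 0 ≤ p)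
    (hp1 : p ≤ 1) :
    ∫⁻ a, ENNReal.ofReal (exp (p * Z a)) ∂μ
      ≤ (∫⁻ a, ENNReal.ofReal (exp (Z a)) ∂μ) ^ p := by
  have hpow : ∀ a, ENNReal.ofReal (exp (p * Z a)) = ENNReal.ofReal (exp (Z a)) ^ p :=
    fun a => by rw [ENNReal.ofReal_rpow_of_pos (exp_pos _), ← exp_mul, mul_comm]
  simp only [hpow]
  exact lintegral_rpow_le_rpow_lintegral (by fun_prop) hp0 hp1

lemma prod_range_rpow_pow_le_rpow {c γ : ℝ} (hc : 1 ≤ c) (hγ0 : 0 ≤ γ) (hγ1 : γ < 1) (n : ℕ) :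
    ∏ t ∈ range n, c ^ (γ ^ t) ≤ c ^ (1 / (1 - γ)) := by
  rw [← Real.rpow_sum_of_pos (by linarith), one_div, ← tsum_geometric_of_lt_one hγ0 hγ1]
  exact Real.rpow_le_rpow_of_exponent_le hc
    (Summable.sum_le_tsum _ (fun t _ => by positivity) (summable_geometric_of_lt_one hγ0 hγ1))

lemma summable_of_iSup_ofReal_exp_sum_ne_top {a : ℕ → ℝ} (ha : ∀ t, 0 ≤ a t)
    (h : ⨆ n, ENNReal.ofReal (exp (∑ t ∈ range n, a t)) ≠ ∞) : Summable a := by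
  set F : ℕ → ℝ≥0∞ := fun n => ENNReal.ofReal (exp (∑ t ∈ range n, a t))
  refine summable_of_sum_range_le (c := (⨆ n, F n).toReal) ha fun n => ?_
  calc ∑ t ∈ range n, a t ≤ exp (∑ t ∈ range n, a t) := by
        linarith [add_one_le_exp (∑ t ∈ range n, a t)]
    _ = (F n).toReal := (ENNReal.toReal_ofReal (exp_pos _).le).symm
    _ ≤ (⨆ n, F n).toReal := ENNReal.toReal_mono h (le_iSup F n)

lemma ofReal_exp_tsum_le_iSup {a : ℕ → ℝ} (ha : Summable a) :
    ENNReal.ofReal (exp (∑' t, a t))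
      ≤ ⨆ n, ENNReal.ofReal (exp (∑ t ∈ range n, a t)) :=
  le_of_tendsto' (((ENNReal.continuous_ofReal.comp continuous_exp).tendsto _).comp
    ha.hasSum.tendsto_sum_nat) (le_iSup (fun n => ENNReal.ofReal (exp (∑ t ∈ range n, a t))))

lemma abs_tsum_pow_mul_le {γ : ℝ} (hγ : 0 ≤ γ) {x : ℕ → ℝ}
    (hx : Summable fun t => γ ^ t * |x t|) : |∑' t, γ ^ t * x t| ≤ ∑' t, γ ^ t * |x t| := by
  have habs : ∀ t, ‖γ ^ t * x t‖ = γ ^ t * |x t| := fun t => by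
    rw [Real.norm_eq_abs, abs_mul, abs_of_nonneg (pow_nonneg hγ t)]
  simpa only [← Real.norm_eq_abs, habs] using
    norm_tsum_le_tsum_norm (f := fun t => γ ^ t * x t) (by simpa only [habs] using hx)

lemma ProbabilityTheory.iIndepFun.lintegral_iSup_ofReal_exp_sum {Ω : Type*} [MeasurableSpace Ω]
    {μ : Measure Ω} {Y : ℕ → Ω → ℝ} (hY : ∀ t, Measurable (Y t)) (hY0 : ∀ t ω, 0 ≤ Y t ω)
    (hindep : iIndepFun Y μ) :
    ∫⁻ ω, ⨆ n, ENNReal.ofReal (exp (∑ t ∈ range n, Y t ω)) ∂μ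
      = ⨆ n, ∏ t ∈ range n, ∫⁻ ω, ENNReal.ofReal (exp (Y t ω)) ∂μ := by
  set g : ℕ → Ω → ℝ≥0∞ := fun t ω => ENNReal.ofReal (exp (Y t ω))
  have hg : ∀ t, Measurable (g t) := fun t => by fun_prop
  have hprod : ∀ n ω, ENNReal.ofReal (exp (∑ t ∈ range n, Y t ω)) = ∏ t ∈ range n, g t ω :=
    fun n ω => by
      rw [exp_sum, ENNReal.ofReal_prod_of_nonneg fun t _ => (exp_pos _).le]
  have hmono : Monotone fun n ω => ∏ t ∈ range n, g t ω := fun m n hmn ω =>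
    prod_le_prod_of_subset_of_one_le' (range_subset_range.2 hmn)
      fun t _ _ => ENNReal.one_le_ofReal.2 (one_le_exp (hY0 t ω))
  simp only [hprod]
  rw [lintegral_iSup (fun n => by fun_prop) hmono]
  congr! 2 with n
  exact lintegral_prod_eq_prod_lintegral_of_indepFun _ g
    (hindep.comp (fun _ y => ENNReal.ofReal (exp y)) fun _ => by fun_prop) hg

lemma lintegral_iSup_ofReal_exp_sum_geometric_le {Ω : Type*} [MeasurableSpace Ω]
    {μ : Measure Ω} [IsProbabilityMeasure μ] {Z : ℕ → Ω → ℝ} (hZ : ∀ t, Measurable (Z t))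
    (hZ0 : ∀ t ω, 0 ≤ Z t ω) (hindep : iIndepFun Z μ) {c : ℝ}
    (hmom : ∀ t, ∫⁻ ω, ENNReal.ofReal (exp (Z t ω)) ∂μ ≤ ENNReal.ofReal c)
    {γ : ℝ} (hγ0 : 0 ≤ γ) (hγ1 : γ < 1) :
    ∫⁻ ω, ⨆ n, ENNReal.ofReal (exp (∑ t ∈ range n, γ ^ t * Z t ω)) ∂μ
      ≤ ENNReal.ofReal (c ^ (1 / (1 - γ))) := by
  have hc : 1 ≤ c := by
    refine ENNReal.one_le_ofReal.1 (le_trans ?_ (hmom 0))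
    calc (1 : ℝ≥0∞) = ∫⁻ _, 1 ∂μ := by simp
      _ ≤ _ := lintegral_mono fun ω => ENNReal.one_le_ofReal.2 (one_le_exp (hZ0 0 ω))
  have hmom_pow : ∀ t, ∫⁻ ω, ENNReal.ofReal (exp (γ ^ t * Z t ω)) ∂μ
      ≤ ENNReal.ofReal (c ^ γ ^ t) := fun t => calc
    _ ≤ (∫⁻ ω, ENNReal.ofReal (exp (Z t ω)) ∂μ) ^ γ ^ t :=
        lintegral_ofReal_exp_mul_le_rpow (hZ t).aemeasurable (by positivity)
          (pow_le_one₀ hγ0 hγ1.le)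
    _ ≤ ENNReal.ofReal c ^ γ ^ t := ENNReal.rpow_le_rpow (hmom t) (by positivity)
    _ = _ := ENNReal.ofReal_rpow_of_nonneg (by linarith) (by positivity)
  rw [iIndepFun.lintegral_iSup_ofReal_exp_sum (fun t => by fun_prop)
    (fun t ω => mul_nonneg (by positivity) (hZ0 t ω))
    (hindep.comp (fun t x => γ ^ t * x) fun t => by fun_prop)]
  refine iSup_le fun n => ?_
  calc _ ≤ ∏ t ∈ range n, ENNReal.ofReal (c ^ γ ^ t) := prod_le_prod' fun t _ => hmom_pow t
    _ = ENNReal.ofReal (∏ t ∈ range n, c ^ γ ^ t) :=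
        (ENNReal.ofReal_prod_of_nonneg fun t _ => by positivity).symm
    _ ≤ _ := ENNReal.ofReal_le_ofReal (prod_range_rpow_pow_le_rpow hc hγ0 hγ1 n)

theorem stmt4
    {Ω : Type*} [MeasureSpace Ω] [IsProbabilityMeasure (ℙ : Measure Ω)]
    (γ : ℝ) (hγ0 : 0 < γ) (hγ1 : γ < 1)
    (β : ℝ) (hβ : 0 < β)
    (X : ℕ → Ω → ℝ) (hmeas : ∀ t, Measurable (X t))
    (hindep : iIndepFun X ℙ)
    (cβ : ℝ)
    (hexp : ∀ t, ∫ ω, Real.exp (β * |X t ω|) ∂(ℙ : Measure Ω) ≤ cβ)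
    (hexpInt : ∀ t, Integrable (fun ω => Real.exp (β * |X t ω|)) ℙ) :
    (∀ᵐ ω ∂(ℙ : Measure Ω), Summable (fun t => γ ^ t * |X t ω|)) ∧
    ∫⁻ ω, ENNReal.ofReal (Real.exp (β * |∑' t, γ ^ t * X t ω|)) ∂(ℙ : Measure Ω)
      ≤ ENNReal.ofReal (cβ ^ ((1 : ℝ) / (1 - γ))) := by
  have hmom : ∀ t, ∫⁻ ω, ENNReal.ofReal (exp (β * |X t ω|)) ≤ ENNReal.ofReal cβ := fun t => by
    rw [← ofReal_integral_eq_lintegral_ofReal (hexpInt t) (ae_of_all _ fun ω => (exp_pos _).le)]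
    exact ENNReal.ofReal_le_ofReal (hexp t)
  have hbound := lintegral_iSup_ofReal_exp_sum_geometric_le (Z := fun t ω => β * |X t ω|)
    (fun t => by fun_prop) (fun t ω => by positivity)
    (hindep.comp (fun _ x => β * |x|) fun _ => by fun_prop) hmom hγ0.le hγ1
  have hsummable : ∀ᵐ ω ∂(ℙ : Measure Ω), Summable (fun t => γ ^ t * |X t ω|) := by
    filter_upwards [ae_lt_top' (by fun_prop) (ne_top_of_le_ne_top ENNReal.ofReal_ne_top hbound)]
      with ω hω
    refine (summable_mul_left_iff hβ.ne').1 ?_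
    simpa only [mul_left_comm] using
      summable_of_iSup_ofReal_exp_sum_ne_top (fun t => by positivity) hω.ne
  refine ⟨hsummable, (lintegral_mono_ae ?_).trans hbound⟩
  filter_upwards [hsummable] with ω hω
  refine le_trans (ENNReal.ofReal_le_ofReal (exp_le_exp.2 ?_))
    (ofReal_exp_tsum_le_iSup (hω.mul_left β |>.congr fun t => by ring))
  calc β * |∑' t, γ ^ t * X t ω| ≤ β * ∑' t, γ ^ t * |X t ω| :=
        mul_le_mul_of_nonneg_left (abs_tsum_pow_mul_le hγ0.le hω) hβ.le
    _ = ∑' t, γ ^ t * (β * |X t ω|) := by rw [← tsum_mul_left]; congr 1; ext t; ring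
end

section
/- Consider the distributional perpetuity equation G =_d γG + R in ℝ with γ ∈ (0,1), G independent of R, and E[log⁺|R|] < ∞. Then there exists a unique distribution solving this equation, namely the law of ∑_{t=0}^∞ γ^t R_t where (R_t)_{t≥0} are i.i.d. copies of R; moreover, this series converges almost surely. -/
open MeasureTheory ProbabilityTheory Filter

/-- `η` solves the perpetuity equation `G =_d γ G + R`: if `X ~ η` is independent of `R`
(joint law the product measure `η ⊗ law(R)`), then `γ X + R ~ η`. -/
def IsPerpetuitySolution {Ω : Type*} [MeasureSpace Ω] (γ : ℝ) (R : Ω → ℝ)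
    (η : Measure ℝ) : Prop :=
  η = Measure.map (fun p : ℝ × ℝ => γ * p.1 + p.2)
        (η.prod ((ℙ : Measure Ω).map R))

/-!
Almost sure convergence is Borel–Cantelli: `E[log⁺|R|] < ∞` gives `∑ P(|R_t| > aᵗ) < ∞`
for every `a > 1`, so `|R_t| ≤ aᵗ` eventually, and `|γ| a < 1` for `a` close to `1`.

Everything else is read off characteristic functions. A solution `η` satisfies
`φ_η(t) = φ_η(γt) φ_R(t)`, hence `φ_η(t) = φ_η(γⁿt) ∏_{k<n} φ_R(γᵏt)`; as `φ_η(γⁿt) → 1`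
and the product has modulus at most `1`, two solutions have the same characteristic
function. By independence the partial sums of the series have characteristic function
`∏_{k<n} φ_R(γᵏt)`, so by dominated convergence the law of the series has their limit as
characteristic function, and this limit satisfies the functional equation.
-/

open Topology Finset Complex

section Summability

variable {Ω : Type*} [MeasureSpace Ω] [IsProbabilityMeasure (ℙ : Measure Ω)]
  {R : Ω → ℝ} {X : ℕ → Ω → ℝ}

lemma ae_eventually_abs_le_pow_of_integrable_posLog {a : ℝ} (ha : 1 < a)
    (hlog : Integrable (fun ω => posLog |R ω|)) (hident : ∀ t, IdentDistrib (X t) R) :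
    ∀ᵐ ω, ∀ᶠ t in atTop, |X t ω| ≤ a ^ t := by
  have hloga : 0 < Real.log a := Real.log_pos ha
  have hle : ∀ t : ℕ, ℙ {ω | a ^ t < |X t ω|}
      ≤ ℙ {ω | posLog |R ω| / Real.log a ∈ Set.Ioi (t : ℝ)} := by
    intro t
    rw [show {ω | a ^ t < |X t ω|} = X t ⁻¹' {x | a ^ t < |x|} from rfl,
      (hident t).measure_mem_eq (measurableSet_lt measurable_const continuous_abs.measurable)]
    refine measure_mono fun ω (hω : a ^ t < |R ω|) => ?_
    have hlog_lt : t * Real.log a < Real.log |R ω| := by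
      simpa [Real.log_pow] using Real.log_lt_log (by positivity) hω
    change (t : ℝ) < posLog |R ω| / Real.log a
    rw [lt_div_iff₀ hloga]
    exact hlog_lt.trans_le (le_max_left _ _)
  have hsum : ∑' t : ℕ, ℙ {ω | a ^ t < |X t ω|} ≠ ⊤ :=
    ((ENNReal.tsum_le_tsum hle).trans_lt (tsum_prob_mem_Ioi_lt_top (hlog.div_const _)
      fun _ => div_nonneg (le_max_right _ _) hloga.le)).ne
  filter_upwards [ae_eventually_notMem hsum] with ω hω
  filter_upwards [hω] with t ht
  exact not_lt.1 ht

theorem ae_summable_pow_mul_of_integrable_posLog {γ : ℝ} (hγ : |γ| < 1)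
    (hlog : Integrable (fun ω => posLog |R ω|)) (hident : ∀ t, IdentDistrib (X t) R) :
    ∀ᵐ ω, Summable fun t => γ ^ t * X t ω := by
  have ha : 1 < 2 / (1 + |γ|) := by rw [one_lt_div (by positivity)]; linarith
  have hγa : |γ| * (2 / (1 + |γ|)) < 1 := by
    rw [mul_div_assoc', div_lt_one (by positivity)]; linarith
  filter_upwards [ae_eventually_abs_le_pow_of_integrable_posLog ha hlog hident] with ω hω
  refine .of_norm_bounded_eventually_nat (summable_geometric_of_lt_one (by positivity) hγa) ?_
  filter_upwards [hω] with t ht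
  rw [Real.norm_eq_abs, abs_mul, abs_pow, mul_pow]
  exact mul_le_mul_of_nonneg_left ht (by positivity)

end Summability

section CharFun

variable {Ω : Type*} {mΩ : MeasurableSpace Ω} {P : Measure Ω}

lemma aemeasurable_tsum_of_ae_summable {f : ℕ → Ω → ℝ} (hf : ∀ n, AEMeasurable (f n) P)
    (hsum : ∀ᵐ ω ∂P, Summable fun n => f n ω) : AEMeasurable (fun ω => ∑' n, f n ω) P :=
  aemeasurable_of_tendsto_metrizable_ae'
    (fun _ => Finset.aemeasurable_fun_sum _ fun k _ => hf k)
    (hsum.mono fun _ h => h.hasSum.tendsto_sum_nat)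

lemma charFun_map_eq_integral {Y : Ω → ℝ} (hY : AEMeasurable Y P) (t : ℝ) :
    charFun (P.map Y) t = ∫ ω, cexp (t * Y ω * I) ∂P := by
  rw [charFun_apply_real, integral_map hY (by fun_prop)]

lemma tendsto_charFun_map_of_ae_tendsto [IsFiniteMeasure P] {X : ℕ → Ω → ℝ} {Y : Ω → ℝ}
    (hX : ∀ n, AEMeasurable (X n) P)
    (h : ∀ᵐ ω ∂P, Tendsto (fun n => X n ω) atTop (𝓝 (Y ω))) (t : ℝ) :
    Tendsto (fun n => charFun (P.map (X n)) t) atTop (𝓝 (charFun (P.map Y) t)) := by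
  simp only [charFun_map_eq_integral (hX _),
    charFun_map_eq_integral (aemeasurable_of_tendsto_metrizable_ae' hX h)]
  refine tendsto_integral_of_dominated_convergence (fun _ => 1) (fun _ => by fun_prop)
    (integrable_const 1) (fun _ => ae_of_all _ fun ω => ?_) (h.mono fun ω hω => ?_)
  · rw [← ofReal_mul, norm_exp_ofReal_mul_I]
  · exact (by fun_prop : Continuous fun x : ℝ => cexp (t * x * I)).tendsto _ |>.comp hω

lemma charFun_map_mul_add_prod (η ν : Measure ℝ) [IsProbabilityMeasure η]
    [IsProbabilityMeasure ν] (γ t : ℝ) :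
    charFun ((η.prod ν).map (fun p => γ * p.1 + p.2)) t = charFun η (γ * t) * charFun ν t := by
  have h : (η.prod ν).map (fun p => γ * p.1 + p.2)
      = ((η.map (γ * ·)).prod ν).map (fun p => p.1 + p.2) := by
    rw [← Measure.map_id (μ := ν),
      Measure.map_prod_map _ _ (measurable_const_mul γ) measurable_id,
      Measure.map_map (by fun_prop) (by fun_prop), Measure.map_id]
    rfl
  have := Measure.isProbabilityMeasure_map (μ := η) (measurable_const_mul γ).aemeasurable
  rw [h, charFun_map_add_prod_eq_mul, Pi.mul_apply, charFun_map_mul]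

end CharFun

namespace IsPerpetuitySolution

variable {Ω : Type*} [MeasureSpace Ω] [IsProbabilityMeasure (ℙ : Measure Ω)]
  {γ : ℝ} {R : Ω → ℝ} {η : Measure ℝ} [IsProbabilityMeasure η]

lemma charFun_eq (hR : AEMeasurable R) (hη : IsPerpetuitySolution γ R η) (t : ℝ) :
    charFun η t = charFun η (γ * t) * charFun ((ℙ : Measure Ω).map R) t := by
  have := Measure.isProbabilityMeasure_map hR
  conv_lhs => rw [hη]
  exact charFun_map_mul_add_prod _ _ γ t

lemma charFun_eq_mul_prod (hR : AEMeasurable R) (hη : IsPerpetuitySolution γ R η) (n : ℕ)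
    (t : ℝ) :
    charFun η t
      = charFun η (γ ^ n * t) * ∏ k ∈ range n, charFun ((ℙ : Measure Ω).map R) (γ ^ k * t) := by
  induction n generalizing t with
  | zero => simp
  | succ n ih =>
    rw [hη.charFun_eq hR, ih, prod_range_succ', mul_assoc]
    simp only [pow_succ, pow_zero, one_mul, mul_assoc]

theorem eq_of_abs_lt_one (hγ : |γ| < 1) (hR : AEMeasurable R) {η' : Measure ℝ}
    [IsProbabilityMeasure η'] (hη : IsPerpetuitySolution γ R η)
    (hη' : IsPerpetuitySolution γ R η') : η = η' := by
  refine Measure.ext_of_charFun (funext fun t => sub_eq_zero.1 (norm_le_zero_iff.1 ?_))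
  have hlim :
      Tendsto (fun n => charFun η (γ ^ n * t) - charFun η' (γ ^ n * t)) atTop (𝓝 0) := by
    have h0 : Tendsto (fun n => γ ^ n * t) atTop (𝓝 0) := by
      simpa using (tendsto_pow_atTop_nhds_zero_of_abs_lt_one hγ).mul_const t
    simpa using (((continuous_charFun (μ := η)).tendsto 0).comp h0).sub
      (((continuous_charFun (μ := η')).tendsto 0).comp h0)
  refine ge_of_tendsto' (by simpa using hlim.norm) fun n => ?_
  rw [hη.charFun_eq_mul_prod hR n, hη'.charFun_eq_mul_prod hR n, ← sub_mul, norm_mul]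
  have := Measure.isProbabilityMeasure_map hR
  exact mul_le_of_le_one_right (norm_nonneg _) ((Finset.norm_prod_le _ _).trans
    (prod_le_one (fun _ _ => norm_nonneg _) fun _ _ => norm_charFun_le_one _))

end IsPerpetuitySolution

section Existence

variable {Ω : Type*} [MeasureSpace Ω] {γ : ℝ} {R : Ω → ℝ} {X : ℕ → Ω → ℝ}

lemma charFun_map_sum_pow_mul (hindep : iIndepFun X) (hident : ∀ t, IdentDistrib (X t) R)
    (n : ℕ) (t : ℝ) :
    charFun ((ℙ : Measure Ω).map fun ω => ∑ k ∈ range n, γ ^ k * X k ω) t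
      = ∏ k ∈ range n, charFun ((ℙ : Measure Ω).map R) (γ ^ k * t) := by
  have hX k := (hident k).aemeasurable_fst
  have hindep' : iIndepFun (fun k ω => γ ^ k * X k ω) :=
    hindep.comp _ fun k => measurable_const_mul (γ ^ k)
  rw [(hindep'.restrict _).charFun_map_fun_finsetSum_eq_prod fun k _ => (hX k).const_mul _,
    Finset.prod_apply]
  exact prod_congr rfl fun k _ => by rw [charFun_map_mul_comp (hX k), (hident k).map_eq]

theorem isPerpetuitySolution_map_tsum [IsProbabilityMeasure (ℙ : Measure Ω)]
    (hindep : iIndepFun X) (hident : ∀ t, IdentDistrib (X t) R)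
    (hsum : ∀ᵐ ω, Summable fun t => γ ^ t * X t ω) :
    IsPerpetuitySolution γ R ((ℙ : Measure Ω).map fun ω => ∑' t, γ ^ t * X t ω) := by
  have hX k := (hident k).aemeasurable_fst
  have hS := aemeasurable_tsum_of_ae_summable (fun k => (hX k).const_mul (γ ^ k)) hsum
  have := Measure.isProbabilityMeasure_map hS
  have := Measure.isProbabilityMeasure_map (hident 0).aemeasurable_snd
  have hlim (t : ℝ) :
      Tendsto (fun n => ∏ k ∈ range n, charFun ((ℙ : Measure Ω).map R) (γ ^ k * t)) atTop
        (𝓝 (charFun ((ℙ : Measure Ω).map fun ω => ∑' t, γ ^ t * X t ω) t)) := by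
    simpa only [charFun_map_sum_pow_mul hindep hident] using tendsto_charFun_map_of_ae_tendsto
      (fun _ => Finset.aemeasurable_fun_sum _ fun k _ => (hX k).const_mul (γ ^ k))
      (hsum.mono fun _ h => h.hasSum.tendsto_sum_nat) t
  refine Measure.ext_of_charFun (funext fun t => ?_)
  rw [charFun_map_mul_add_prod]
  refine tendsto_nhds_unique ((hlim t).comp (tendsto_add_atTop_nat 1)) ?_
  convert (hlim (γ * t)).mul_const (charFun ((ℙ : Measure Ω).map R) t) using 2
  simp only [Function.comp_apply, prod_range_succ', pow_succ, pow_zero, one_mul, mul_assoc]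

end Existence

theorem stmt10_general
    {Ω : Type*} [MeasureSpace Ω] [IsProbabilityMeasure (ℙ : Measure Ω)]
    (γ : ℝ) (hγ0 : 0 < γ) (hγ1 : γ < 1)
    (R : Ω → ℝ)
    (hlog : Integrable (fun ω => posLog |R ω|) ℙ)
    (Rseq : ℕ → Ω → ℝ)
    (hindep : iIndepFun Rseq ℙ)
    (hident : ∀ t, IdentDistrib (Rseq t) R ℙ ℙ) :
    (∀ᵐ ω ∂(ℙ : Measure Ω), Summable (fun t => γ ^ t * Rseq t ω)) ∧
    (IsProbabilityMeasure ((ℙ : Measure Ω).map (fun ω => ∑' t, γ ^ t * Rseq t ω)) ∧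
      IsPerpetuitySolution γ R ((ℙ : Measure Ω).map (fun ω => ∑' t, γ ^ t * Rseq t ω))) ∧
    (∀ η : Measure ℝ, IsProbabilityMeasure η → IsPerpetuitySolution γ R η →
      η = (ℙ : Measure Ω).map (fun ω => ∑' t, γ ^ t * Rseq t ω)) := by
  have hγ : |γ| < 1 := abs_lt.2 ⟨by linarith, hγ1⟩
  have hsum := ae_summable_pow_mul_of_integrable_posLog hγ hlog hident
  have hS := aemeasurable_tsum_of_ae_summable
    (fun t => (hident t).aemeasurable_fst.const_mul (γ ^ t)) hsum
  have := Measure.isProbabilityMeasure_map hS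
  have hsol := isPerpetuitySolution_map_tsum hindep hident hsum
  exact ⟨hsum, ⟨this, hsol⟩, fun η _ hη =>
    hη.eq_of_abs_lt_one hγ (hident 0).aemeasurable_snd hsol⟩

theorem stmt10
    {Ω : Type*} [MeasureSpace Ω] [IsProbabilityMeasure (ℙ : Measure Ω)]
    (γ : ℝ) (hγ0 : 0 < γ) (hγ1 : γ < 1)
    (R : Ω → ℝ) (hmeasR : Measurable R)
    (hlog : Integrable (fun ω => posLog |R ω|) ℙ)
    (Rseq : ℕ → Ω → ℝ) (hmeas : ∀ t, Measurable (Rseq t))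
    (hindep : iIndepFun Rseq ℙ)
    (hident : ∀ t, IdentDistrib (Rseq t) R ℙ ℙ) :
    (∀ᵐ ω ∂(ℙ : Measure Ω), Summable (fun t => γ ^ t * Rseq t ω)) ∧
    (IsProbabilityMeasure ((ℙ : Measure Ω).map (fun ω => ∑' t, γ ^ t * Rseq t ω)) ∧
      IsPerpetuitySolution γ R ((ℙ : Measure Ω).map (fun ω => ∑' t, γ ^ t * Rseq t ω))) ∧
    (∀ η : Measure ℝ, IsProbabilityMeasure η → IsPerpetuitySolution γ R η →
      η = (ℙ : Measure Ω).map (fun ω => ∑' t, γ ^ t * Rseq t ω)) :=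
  stmt10_general γ hγ0 hγ1 R hlog Rseq hindep hident
end

section
/- Let d ≥ 1, γ ∈ (0,1), and let (R_1,J_1),...,(R_d,J_d) be random pairs with R_i real-valued and J_i taking values in {1,...,d}. Suppose the distributional Bellman operator T on P(ℝ)^d, defined componentwise by T_i(η_1,...,η_d) = law(R_i + γ G_{J_i}) with G_j ~ η_j and G_1,...,G_d,(R_i,J_i) independent, has a fixed point. Then the fixed point is unique. -/
open MeasureTheory ProbabilityTheory Filter

/-- The distributional Bellman operator on `(Fin d → Measure ℝ)`:
`T_i(η) = law(R_i + γ G_{J_i})` where `G_j ~ η_j` and `G_1,…,G_d,(R_i,J_i)` are independent.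
Since only `G_{J_i}` appears, this law can be written as the bind of the law of `(R_i, J_i)`
against `(r, j) ↦ (g ↦ r + γ g)_* η_j`. -/
noncomputable def bellmanOp {Ω : Type*} [MeasureSpace Ω] {d : ℕ}
    (γ : ℝ) (R : Fin d → Ω → ℝ) (J : Fin d → Ω → Fin d)
    (η : Fin d → Measure ℝ) : Fin d → Measure ℝ :=
  fun i => Measure.bind ((ℙ : Measure Ω).map (fun ω => (R i ω, J i ω)))
    (fun p : ℝ × Fin d => Measure.map (fun g => p.1 + γ * g) (η p.2))

/-!
Compare two fixed points `η`, `ν` through the relation `η j B ≤ ν j (thickening δ B) + ε` for all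
`j` and measurable `B`. Each component of `T` mixes laws of `r + γ G`, and `g ↦ r + γ g` is
`γ`-Lipschitz, so `T` carries the relation at radius `δ` to the relation at radius `γ δ` with the
same `ε`. For any `ε > 0` the relation holds for some finite `δ`, because finitely many probability
measures are uniformly small outside a large ball. Iterating at the fixed points sends the radius
to `0`, so the Lévy–Prokhorov distance between `η j` and `ν j` is `0`.
-/

open Metric Set
open scoped ENNReal NNReal Topology

section ThickeningComparison

variable {X Y : Type*} [PseudoMetricSpace X]

lemma LipschitzWith.thickening_preimage_subset [PseudoMetricSpace Y] {f : X → Y} {K : ℝ≥0}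
    (hf : LipschitzWith K f) (hK : 0 < K) (δ : ℝ) (B : Set Y) :
    thickening δ (f ⁻¹' B) ⊆ f ⁻¹' thickening (K * δ) B := by
  intro x hx
  obtain ⟨z, hzB, hxz⟩ := mem_thickening_iff.1 hx
  exact mem_thickening_iff.2 ⟨f z, hzB,
    (hf.dist_le_mul x z).trans_lt (mul_lt_mul_of_pos_left hxz (by exact_mod_cast hK))⟩

variable [MeasurableSpace X]

lemma LipschitzWith.map_apply_le_map_apply_thickening_add [OpensMeasurableSpace X]
    [PseudoMetricSpace Y] [MeasurableSpace Y] [BorelSpace Y] {f : X → Y} {K : ℝ≥0}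
    (hf : LipschitzWith K f) (hK : 0 < K) {μ ν : Measure X} {δ : ℝ} {ε : ℝ≥0∞}
    (h : ∀ B, MeasurableSet B → μ B ≤ ν (thickening δ B) + ε)
    {B : Set Y} (hB : MeasurableSet B) :
    μ.map f B ≤ ν.map f (thickening (K * δ) B) + ε := by
  have hfm : Measurable f := hf.continuous.measurable
  rw [Measure.map_apply hfm hB, Measure.map_apply hfm isOpen_thickening.measurableSet]
  exact (h _ (hfm hB)).trans
    (add_le_add_left (measure_mono (hf.thickening_preimage_subset hK δ B)) ε)

lemma tendsto_measure_compl_closedBall_nat [OpensMeasurableSpace X] (μ : Measure X)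
    [IsFiniteMeasure μ] (x : X) :
    Tendsto (fun n : ℕ => μ (closedBall x n)ᶜ) atTop (𝓝 0) := by
  have h := tendsto_measure_iInter_atTop (μ := μ) (s := fun n : ℕ => (closedBall x n)ᶜ)
    (fun n => measurableSet_closedBall.compl.nullMeasurableSet)
    (fun m n hmn => compl_subset_compl.2 (closedBall_subset_closedBall (Nat.cast_le.2 hmn)))
    ⟨0, measure_ne_top μ _⟩
  rwa [← compl_iUnion, iUnion_closedBall_nat, compl_univ, measure_empty] at h

/- Outside a large ball every measure has mass `< ε`, and a set meeting the ball has a thickening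
containing the whole ball. -/
lemma exists_measure_le_measure_thickening_add [OpensMeasurableSpace X] [Nonempty X]
    {ι : Type*} [Finite ι] (μ ν : ι → Measure X) [∀ i, IsProbabilityMeasure (μ i)]
    [∀ i, IsProbabilityMeasure (ν i)] {ε : ℝ≥0∞} (hε : 0 < ε) :
    ∃ δ : ℝ, ∀ i j B, μ i B ≤ ν j (thickening δ B) + ε := by
  obtain ⟨x⟩ := ‹Nonempty X›
  have htail : ∀ ρ : Measure X, IsFiniteMeasure ρ → ∀ᶠ n : ℕ in atTop, ρ (closedBall x n)ᶜ < ε :=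
    fun ρ _ => (tendsto_measure_compl_closedBall_nat ρ x).eventually_lt_const hε
  obtain ⟨M, hM⟩ := ((eventually_all.2 fun i => htail (μ i) inferInstance).and
    (eventually_all.2 fun j => htail (ν j) inferInstance)).exists
  refine ⟨2 * M + 1, fun i j B => ?_⟩
  by_cases hB : (B ∩ closedBall x M).Nonempty
  · obtain ⟨a, haB, haM⟩ := hB
    have hball : closedBall x M ⊆ thickening (2 * M + 1) B := fun y hy =>
      mem_thickening_iff.2 ⟨a, haB, by
        linarith [dist_triangle_right y a x, mem_closedBall.1 hy, mem_closedBall.1 haM]⟩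
    calc μ i B ≤ 1 := prob_le_one
      _ = ν j (closedBall x M ∪ (closedBall x M)ᶜ) := by rw [union_compl_self, measure_univ]
      _ ≤ ν j (closedBall x M) + ν j (closedBall x M)ᶜ := measure_union_le _ _
      _ ≤ ν j (thickening (2 * M + 1) B) + ε := add_le_add (measure_mono hball) (hM.2 j).le
  · have hBc : B ⊆ (closedBall x M)ᶜ := fun y hy hyM => hB ⟨y, hy, hyM⟩
    exact (measure_mono hBc).trans ((hM.1 i).le.trans le_add_self)

lemma MeasureTheory.Measure.eq_of_levyProkhorovEDist_eq_zero [BorelSpace X] {μ ν : Measure X}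
    [IsFiniteMeasure μ] [IsFiniteMeasure ν] (h : levyProkhorovEDist μ ν = 0) : μ = ν := by
  have hclosed : ∀ s, IsClosed s → μ s = ν s := fun s hs =>
    measure_eq_measure_of_levyProkhorovEDist_eq_zero_of_isClosed h hs
      ⟨1, one_pos, measure_ne_top _ _⟩ ⟨1, one_pos, measure_ne_top _ _⟩
  exact ext_of_generate_finite _ (BorelSpace.measurable_eq.trans borel_eq_generateFrom_isClosed)
    isPiSystem_isClosed hclosed (hclosed univ isClosed_univ)

end ThickeningComparison

lemma MeasureTheory.Measure.bind_apply_le_bind_apply_add {α β : Type*} [MeasurableSpace α] [MeasurableSpace β]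
    {μ : Measure α} [IsZeroOrProbabilityMeasure μ] {κ κ' : α → Measure β}
    (hκ : Measurable κ) (hκ' : Measurable κ') {B B' : Set β}
    (hB : MeasurableSet B) (hB' : MeasurableSet B') {ε : ℝ≥0∞}
    (h : ∀ a, κ a B ≤ κ' a B' + ε) :
    μ.bind κ B ≤ μ.bind κ' B' + ε := by
  rw [Measure.bind_apply hB hκ.aemeasurable, Measure.bind_apply hB' hκ'.aemeasurable]
  calc ∫⁻ a, κ a B ∂μ ≤ ∫⁻ a, κ' a B' + ε ∂μ := lintegral_mono h
    _ = ∫⁻ a, κ' a B' ∂μ + ε * μ univ := by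
        rw [lintegral_add_right _ measurable_const, lintegral_const]
    _ ≤ ∫⁻ a, κ' a B' ∂μ + ε := by gcongr; exact mul_le_of_le_one_right' prob_le_one

lemma measurable_map_add_mul {ι : Type*} [MeasurableSpace ι] [Countable ι]
    [MeasurableSingletonClass ι] (γ : ℝ) (η : ι → Measure ℝ) [∀ j, SFinite (η j)] :
    Measurable fun p : ℝ × ι => (η p.2).map (fun g => p.1 + γ * g) := by
  refine measurable_from_prod_countable_left fun j => ?_
  have hmap : (fun r : ℝ => (η j).map (fun g => r + γ * g))
      = fun r => ((η j).map (Prod.mk r)).map (fun q => q.1 + γ * q.2) := by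
    funext r
    rw [Measure.map_map (by fun_prop) measurable_prodMk_left]
    rfl
  rw [hmap]
  exact (Measure.measurable_map _ (by fun_prop)).comp Measurable.map_prodMk_left

section Bellman

variable {Ω : Type*} [MeasureSpace Ω] [IsProbabilityMeasure (ℙ : Measure Ω)] {d : ℕ} {γ : ℝ} {R : Fin d → Ω → ℝ} {J : Fin d → Ω → Fin d}
  {η ν : Fin d → Measure ℝ}

lemma bellmanOp_apply_le_thickening_add (hγ : 0 < γ) [∀ j, SFinite (η j)] [∀ j, SFinite (ν j)]
    {δ : ℝ} {ε : ℝ≥0∞} (h : ∀ j B, MeasurableSet B → η j B ≤ ν j (thickening δ B) + ε)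
    (i : Fin d) {B : Set ℝ} (hB : MeasurableSet B) :
    bellmanOp γ R J η i B ≤ bellmanOp γ R J ν i (thickening (γ * δ) B) + ε := by
  have hLip : ∀ r : ℝ, LipschitzWith γ.toNNReal fun g => r + γ * g := fun r =>
    LipschitzWith.of_dist_le_mul fun x y => by
      rw [Real.dist_eq, Real.dist_eq, Real.coe_toNNReal γ hγ.le, add_sub_add_left_eq_sub,
        ← mul_sub, abs_mul, abs_of_pos hγ]
  refine Measure.bind_apply_le_bind_apply_add (measurable_map_add_mul γ η)
    (measurable_map_add_mul γ ν) hB isOpen_thickening.measurableSet fun p => ?_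
  simpa only [Real.coe_toNNReal γ hγ.le] using
    (hLip p.1).map_apply_le_map_apply_thickening_add (Real.toNNReal_pos.2 hγ) (h p.2) hB

lemma measure_le_measure_thickening_pow_mul_add_of_bellmanOp_eq (hγ : 0 < γ)
    [∀ j, SFinite (η j)] [∀ j, SFinite (ν j)]
    (hfixη : bellmanOp γ R J η = η) (hfixν : bellmanOp γ R J ν = ν)
    {δ : ℝ} {ε : ℝ≥0∞} (h : ∀ j B, MeasurableSet B → η j B ≤ ν j (thickening δ B) + ε) (n : ℕ) :
    ∀ j B, MeasurableSet B → η j B ≤ ν j (thickening (γ ^ n * δ) B) + ε := by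
  induction n with
  | zero => simpa using h
  | succ n ih =>
    intro j B hB
    rw [← hfixη, ← hfixν, pow_succ', mul_assoc]
    exact bellmanOp_apply_le_thickening_add hγ ih j hB

lemma levyProkhorovEDist_eq_zero_of_bellmanOp_eq (hγ0 : 0 < γ) (hγ1 : γ < 1)
    [∀ j, IsProbabilityMeasure (η j)] [∀ j, IsProbabilityMeasure (ν j)]
    (hfixη : bellmanOp γ R J η = η) (hfixν : bellmanOp γ R J ν = ν) (i : Fin d) :
    levyProkhorovEDist (η i) (ν i) = 0 := by
  refine nonpos_iff_eq_zero.1 (levyProkhorovEDist_le_of_forall_le _ _ 0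
    fun ε B hε hε_top hB => ?_)
  obtain ⟨δ, hδ⟩ := exists_measure_le_measure_thickening_add η ν hε
  have hpow : Tendsto (fun n : ℕ => γ ^ n * δ) atTop (𝓝 0) := by
    simpa using (tendsto_pow_atTop_nhds_zero_of_lt_one hγ0.le hγ1).mul_const δ
  obtain ⟨n, hn⟩ := (hpow.eventually_le_const (ENNReal.toReal_pos hε.ne' hε_top.ne)).exists
  calc η i B ≤ ν i (thickening (γ ^ n * δ) B) + ε :=
        measure_le_measure_thickening_pow_mul_add_of_bellmanOp_eq hγ0 hfixη hfixν
          (fun j B _ => hδ j j B) n i B hB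
    _ ≤ ν i (thickening ε.toReal B) + ε := by gcongr

end Bellman

theorem stmt11_general
    {Ω : Type*} [MeasureSpace Ω] [IsProbabilityMeasure (ℙ : Measure Ω)]
    {d : ℕ}
    (γ : ℝ) (hγ0 : 0 < γ) (hγ1 : γ < 1)
    (R : Fin d → Ω → ℝ) (J : Fin d → Ω → Fin d)
    (η ν : Fin d → Measure ℝ)
    (hη : ∀ i, IsProbabilityMeasure (η i)) (hν : ∀ i, IsProbabilityMeasure (ν i))
    (hfixη : bellmanOp γ R J η = η) (hfixν : bellmanOp γ R J ν = ν) :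
    η = ν :=
  funext fun i => Measure.eq_of_levyProkhorovEDist_eq_zero
    (levyProkhorovEDist_eq_zero_of_bellmanOp_eq hγ0 hγ1 hfixη hfixν i)

theorem stmt11
    {Ω : Type*} [MeasureSpace Ω] [IsProbabilityMeasure (ℙ : Measure Ω)]
    {d : ℕ} (hd : 1 ≤ d)
    (γ : ℝ) (hγ0 : 0 < γ) (hγ1 : γ < 1)
    (R : Fin d → Ω → ℝ) (J : Fin d → Ω → Fin d)
    (hmeasR : ∀ i, Measurable (R i)) (hmeasJ : ∀ i, Measurable (J i))
    (η ν : Fin d → Measure ℝ)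
    (hη : ∀ i, IsProbabilityMeasure (η i)) (hν : ∀ i, IsProbabilityMeasure (ν i))
    (hfixη : bellmanOp γ R J η = η) (hfixν : bellmanOp γ R J ν = ν) :
    η = ν :=
  stmt11_general γ hγ0 hγ1 R J η ν hη hν hfixη hfixν
end

section
/- Let R_1,...,R_d be independent real-valued random variables, α > 0, L slowly varying, and c_1,...,c_d ∈ [0,∞) with at least one c_j > 0, such that lim_{x→∞} P[|R_j| > x]/(x^{-α}L(x)) = c_j for every j. Then the Euclidean norm of R = (R_1,...,R_d) satisfies lim_{x→∞} P[|R| > x]/(x^{-α}L(x)) = c_1 + ... + c_d. -/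
/-!
Write `T(x) = ∑ⱼ P[|Rⱼ| > x]`. Since every `|Rⱼ| ≤ |R|`, independence gives
`P[|R| > x] ≥ 1 - ∏ⱼ (1 - P[|Rⱼ| > x]) ≥ T(x) / (1 + T(x))`. Conversely, if `|R| > x` then
`∑ⱼ |Rⱼ| > x`, so either the largest coordinate exceeds `(1 - dε)x` or two coordinates
exceed `εx`, and pairwise independence gives `P[|R| > x] ≤ T((1 - dε)x) + T(εx)²`.
Slow variation turns `T(tx) / (x^{-α} L(x))` into `t^{-α} ∑ⱼ cⱼ` while `T(εx) → 0`, so the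
normalized tail of `|R|` is squeezed between `∑ⱼ cⱼ` and `(1 - dε)^{-α} ∑ⱼ cⱼ` for every
small `ε > 0`.
-/

open MeasureTheory ProbabilityTheory Filter

/-- A function `L` is slowly varying (at infinity) if `L(tx)/L(x) → 1` for every `t > 0`. -/
def SlowlyVarying (L : ℝ → ℝ) : Prop :=
  ∀ t > (0:ℝ), Tendsto (fun x => L (t * x) / L x) atTop (nhds 1)

open Topology Finset

lemma abs_le_sqrt_sum_sq {ι : Type*} [Fintype ι] (a : ι → ℝ) (i : ι) :
    |a i| ≤ √(∑ j, a j ^ 2) := by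
  rw [← Real.sqrt_sq_eq_abs]
  exact Real.sqrt_le_sqrt (single_le_sum (fun j _ => sq_nonneg (a j)) (mem_univ i))

lemma sqrt_sum_sq_le_sum_abs {ι : Type*} [Fintype ι] (a : ι → ℝ) :
    √(∑ j, a j ^ 2) ≤ ∑ j, |a j| :=
  Real.sqrt_le_iff.mpr ⟨sum_nonneg fun j _ => abs_nonneg _, by
    simpa only [sq_abs] using sum_sq_le_sq_sum_of_nonneg fun j _ => abs_nonneg (a j)⟩

lemma exists_lt_abs_or_exists_two_lt_abs {ι : Type*} [Fintype ι] [Nonempty ι] {a : ι → ℝ}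
    {x y : ℝ} (hy : 0 ≤ y) (hx : x < ∑ j, |a j|) :
    (∃ i, x - Fintype.card ι * y < |a i|) ∨ ∃ i j, i ≠ j ∧ y < |a i| ∧ y < |a j| := by
  classical
  obtain ⟨i, -, hi⟩ := exists_max_image univ (fun j => |a j|) univ_nonempty
  by_cases h : ∃ j, j ≠ i ∧ y < |a j|
  · obtain ⟨j, hji, hj⟩ := h
    exact Or.inr ⟨j, i, hji, hj, hj.trans_le (hi j (mem_univ j))⟩
  · push Not at h
    have hle : ∀ j, |a j| ≤ y + if j = i then |a i| else 0 := by
      intro j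
      split_ifs with hj
      · subst hj; linarith
      · simpa using h j hj
    have hsum := sum_le_sum fun j (_ : j ∈ univ) => hle j
    simp only [sum_add_distrib, sum_ite_eq', mem_univ, if_true, sum_const, card_univ,
      nsmul_eq_mul] at hsum
    exact Or.inl ⟨i, by linarith⟩

lemma prod_one_sub_le_inv_one_add_sum {ι : Type*} (s : Finset ι) {p : ι → ℝ}
    (h0 : ∀ j ∈ s, 0 ≤ p j) (h1 : ∀ j ∈ s, p j ≤ 1) :
    ∏ j ∈ s, (1 - p j) ≤ (1 + ∑ j ∈ s, p j)⁻¹ :=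
  calc ∏ j ∈ s, (1 - p j) ≤ ∏ j ∈ s, Real.exp (-p j) :=
        prod_le_prod (fun j hj => by linarith [h1 j hj]) fun j _ => Real.one_sub_le_exp_neg _
    _ = (Real.exp (∑ j ∈ s, p j))⁻¹ := by
        rw [← Real.exp_neg, ← sum_neg_distrib, Real.exp_sum]
    _ ≤ (1 + ∑ j ∈ s, p j)⁻¹ := inv_anti₀ (by linarith [sum_nonneg h0])
        (by linarith [Real.add_one_le_exp (∑ j ∈ s, p j)])

lemma tendsto_measureReal_lt_atTop {Ω : Type*} [MeasurableSpace Ω] (μ : Measure Ω)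
    [IsFiniteMeasure μ] {Y : Ω → ℝ} (hY : Measurable Y) :
    Tendsto (fun x => μ.real {ω | x < Y ω}) atTop (𝓝 0) := by
  have h := tendsto_measure_iInter_atTop (μ := μ) (s := fun x : ℝ => {ω | x < Y ω})
    (fun x => (measurableSet_lt measurable_const hY).nullMeasurableSet)
    (fun x x' hxx' ω hω => hxx'.trans_lt hω) ⟨0, measure_ne_top _ _⟩
  have hempty : (⋂ x : ℝ, {ω | x < Y ω}) = ∅ :=
    Set.eq_empty_of_forall_notMem fun ω hω => lt_irrefl (Y ω) (Set.mem_iInter.mp hω (Y ω))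
  rw [hempty, measure_empty] at h
  exact (ENNReal.tendsto_toReal ENNReal.zero_ne_top).comp h

lemma SlowlyVarying.tendsto_comp_mul_div {L : ℝ → ℝ} (hL : SlowlyVarying L)
    (hLpos : ∀ x > (0:ℝ), 0 < L x) {f : ℝ → ℝ} {α c t : ℝ}
    (hf : Tendsto (fun x => f x / (x ^ (-α) * L x)) atTop (𝓝 c)) (ht : 0 < t) :
    Tendsto (fun x => f (t * x) / (x ^ (-α) * L x)) atTop (𝓝 (c * t ^ (-α))) := by
  have h := (hf.comp (tendsto_id.const_mul_atTop ht)).mul ((hL t ht).const_mul (t ^ (-α)))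
  rw [mul_one] at h
  refine h.congr' ?_
  filter_upwards [eventually_gt_atTop 0] with x hx
  have hLtx := hLpos (t * x) (mul_pos ht hx)
  simp only [Function.comp_apply, id, Real.mul_rpow ht.le hx.le]
  field_simp

lemma tendsto_of_tendsto_lower_of_eventually_upper {β γ α : Type*} [LinearOrder α]
    [TopologicalSpace α] [OrderTopology α] {l : Filter β} {l' : Filter γ} [l'.NeBot]
    {f g : β → α} {u : γ → α} {a : α} (hg : Tendsto g l (𝓝 a)) (hgf : g ≤ᶠ[l] f)
    (hu : Tendsto u l' (𝓝 a))
    (hup : ∀ᶠ ε in l', ∃ h : β → α, Tendsto h l (𝓝 (u ε)) ∧ f ≤ᶠ[l] h) :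
    Tendsto f l (𝓝 a) := by
  refine tendsto_order.2 ⟨fun b hb => ?_, fun b hb => ?_⟩
  · filter_upwards [hg.eventually (lt_mem_nhds hb), hgf] with x h1 h2 using h1.trans_le h2
  · obtain ⟨ε, hε, h, hh, hfh⟩ := ((hu.eventually (gt_mem_nhds hb)).and hup).exists
    filter_upwards [hfh, hh.eventually (gt_mem_nhds hε)] with x h1 h2 using h1.trans_lt h2

lemma SlowlyVarying.tendsto_div_of_tail_bounds {L : ℝ → ℝ} (hL : SlowlyVarying L)
    (hLpos : ∀ x > (0:ℝ), 0 < L x) {α k S : ℝ} {F T : ℝ → ℝ} (hT0 : Tendsto T atTop (𝓝 0))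
    (hTq : Tendsto (fun x => T x / (x ^ (-α) * L x)) atTop (𝓝 S))
    (hlow : ∀ x, T x / (1 + T x) ≤ F x)
    (hup : ∀ ε > (0:ℝ), ∀ x > (0:ℝ), F x ≤ T ((1 - k * ε) * x) + T (ε * x) ^ 2) :
    Tendsto (fun x => F x / (x ^ (-α) * L x)) atTop (𝓝 S) := by
  have hq : ∀ x > (0:ℝ), 0 < x ^ (-α) * L x :=
    fun x hx => mul_pos (Real.rpow_pos_of_pos hx _) (hLpos x hx)
  have hβ : Tendsto (fun ε : ℝ => 1 - k * ε) (𝓝 0) (𝓝 1) := by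
    simpa using ((tendsto_id (x := 𝓝 (0:ℝ))).const_mul k).const_sub 1
  refine tendsto_of_tendsto_lower_of_eventually_upper (l' := 𝓝[>] (0:ℝ))
    (g := fun x => T x / (x ^ (-α) * L x) / (1 + T x))
    (u := fun ε => S * (1 - k * ε) ^ (-α)) ?_ ?_ ?_ ?_
  · convert hTq.div (hT0.const_add 1) (by norm_num) using 2 <;> simp
  · filter_upwards [eventually_gt_atTop 0] with x hx
    rw [div_right_comm]
    exact div_le_div_of_nonneg_right (hlow x) (hq x hx).le
  · refine tendsto_nhdsWithin_of_tendsto_nhds ?_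
    simpa using (hβ.rpow_const (Or.inl one_ne_zero)).const_mul S
  · filter_upwards [self_mem_nhdsWithin,
      nhdsWithin_le_nhds (hβ.eventually (lt_mem_nhds one_pos))] with ε hε hβε
    refine ⟨fun x => T ((1 - k * ε) * x) / (x ^ (-α) * L x)
        + T (ε * x) / (x ^ (-α) * L x) * T (ε * x), ?_, ?_⟩
    · simpa using (hL.tendsto_comp_mul_div hLpos hTq hβε).add
        ((hL.tendsto_comp_mul_div hLpos hTq hε).mul (hT0.comp (tendsto_id.const_mul_atTop hε)))
    · filter_upwards [eventually_gt_atTop 0] with x hx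
      calc F x / (x ^ (-α) * L x)
          ≤ (T ((1 - k * ε) * x) + T (ε * x) ^ 2) / (x ^ (-α) * L x) :=
            div_le_div_of_nonneg_right (hup ε hε x hx) (hq x hx).le
        _ = _ := by ring

section TailBounds

variable {Ω ι : Type*} [MeasurableSpace Ω] {μ : Measure Ω} [IsProbabilityMeasure μ]
  {R : ι → Ω → ℝ}

lemma measureReal_iUnion_ne_inter_le_mul (hindep : Pairwise fun i j => IndepFun (R i) (R j) μ)
    (y : ℝ) (i j : ι) :
    μ.real (⋃ (_ : i ≠ j), {ω | y < |R i ω|} ∩ {ω | y < |R j ω|})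
      ≤ μ.real {ω | y < |R i ω|} * μ.real {ω | y < |R j ω|} := by
  by_cases hij : i = j
  · simp [hij, mul_nonneg]
  · have h := (hindep hij).measure_inter_preimage_eq_mul {z : ℝ | y < |z|} {z : ℝ | y < |z|}
      (measurableSet_lt measurable_const measurable_abs)
      (measurableSet_lt measurable_const measurable_abs)
    calc μ.real (⋃ (_ : i ≠ j), {ω | y < |R i ω|} ∩ {ω | y < |R j ω|})
        ≤ μ.real ({ω | y < |R i ω|} ∩ {ω | y < |R j ω|}) :=
          measureReal_mono (Set.iUnion_subset fun _ => subset_rfl)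
      _ = _ := (congrArg ENNReal.toReal h).trans ENNReal.toReal_mul

variable [Fintype ι]

lemma sum_div_one_add_sum_le_measureReal_sqrt_gt (hmeas : ∀ j, Measurable (R j))
    (hindep : iIndepFun R μ) (x : ℝ) :
    (∑ j, μ.real {ω | x < |R j ω|}) / (1 + ∑ j, μ.real {ω | x < |R j ω|})
      ≤ μ.real {ω | x < √(∑ j, R j ω ^ 2)} := by
  set p : ι → ℝ := fun j => μ.real {ω | x < |R j ω|}
  have hA : ∀ j, MeasurableSet {ω | x < |R j ω|} :=
    fun j => measurableSet_lt measurable_const (hmeas j).abs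
  have hprod : μ.real (⋂ j, {ω | x < |R j ω|}ᶜ) = ∏ j, (1 - p j) := by
    have h := hindep.measure_inter_preimage_eq_mul (S := univ)
      (sets := fun _ => {z : ℝ | x < |z|}ᶜ)
      fun _ _ => (measurableSet_lt measurable_const measurable_abs).compl
    simp only [mem_univ, Set.iInter_true] at h
    change (μ (⋂ j, R j ⁻¹' {z : ℝ | x < |z|}ᶜ)).toReal = _
    rw [h, ENNReal.toReal_prod]
    exact prod_congr rfl fun j _ => probReal_compl_eq_one_sub (hA j)
  have hunion : μ.real (⋃ j, {ω | x < |R j ω|}) = 1 - ∏ j, (1 - p j) := by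
    rw [← hprod, ← probReal_compl_eq_one_sub (MeasurableSet.iInter fun j => (hA j).compl),
      Set.compl_iInter]
    simp only [compl_compl]
  have hs : 0 ≤ ∑ j, p j := sum_nonneg fun j _ => measureReal_nonneg
  calc (∑ j, p j) / (1 + ∑ j, p j) = 1 - (1 + ∑ j, p j)⁻¹ := by field_simp; ring
    _ ≤ 1 - ∏ j, (1 - p j) := by
        gcongr
        exact prod_one_sub_le_inv_one_add_sum _ (fun j _ => measureReal_nonneg)
          fun j _ => measureReal_le_one
    _ = μ.real (⋃ j, {ω | x < |R j ω|}) := hunion.symm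
    _ ≤ μ.real {ω | x < √(∑ j, R j ω ^ 2)} :=
        measureReal_mono <| Set.iUnion_subset fun j ω hω =>
          lt_of_lt_of_le hω (abs_le_sqrt_sum_sq (fun i => R i ω) j)

lemma measureReal_sqrt_gt_le [Nonempty ι]
    (hindep : Pairwise fun i j => IndepFun (R i) (R j) μ) {y : ℝ} (hy : 0 ≤ y) (x : ℝ) :
    μ.real {ω | x < √(∑ j, R j ω ^ 2)}
      ≤ ∑ j, μ.real {ω | x - Fintype.card ι * y < |R j ω|}
        + (∑ j, μ.real {ω | y < |R j ω|}) ^ 2 := by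
  have hsub : {ω | x < √(∑ j, R j ω ^ 2)} ⊆
      (⋃ j, {ω | x - Fintype.card ι * y < |R j ω|})
      ∪ ⋃ i, ⋃ j, ⋃ (_ : i ≠ j), {ω | y < |R i ω|} ∩ {ω | y < |R j ω|} := by
    intro ω hω
    rcases exists_lt_abs_or_exists_two_lt_abs hy
        (hω.out.trans_le (sqrt_sum_sq_le_sum_abs fun j => R j ω)) with
      ⟨i, hi⟩ | ⟨i, j, hij, hi, hj⟩
    · exact Or.inl (Set.mem_iUnion.mpr ⟨i, hi⟩)
    · exact Or.inr (Set.mem_iUnion₂.mpr ⟨i, j, Set.mem_iUnion.mpr ⟨hij, hi, hj⟩⟩)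
  calc μ.real {ω | x < √(∑ j, R j ω ^ 2)}
      ≤ μ.real (⋃ j, {ω | x - Fintype.card ι * y < |R j ω|})
        + μ.real (⋃ i, ⋃ j, ⋃ (_ : i ≠ j), {ω | y < |R i ω|} ∩ {ω | y < |R j ω|}) :=
        (measureReal_mono hsub).trans (measureReal_union_le _ _)
    _ ≤ ∑ j, μ.real {ω | x - Fintype.card ι * y < |R j ω|}
        + ∑ i, ∑ j, μ.real {ω | y < |R i ω|} * μ.real {ω | y < |R j ω|} := by
        gcongr
        · exact measureReal_iUnion_fintype_le _
        · refine (measureReal_iUnion_fintype_le _).trans (sum_le_sum fun i _ => ?_)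
          exact (measureReal_iUnion_fintype_le _).trans
            (sum_le_sum fun j _ => measureReal_iUnion_ne_inter_le_mul hindep y i j)
    _ = _ := by rw [sq, sum_mul_sum]

end TailBounds

theorem stmt18_general
    {Ω : Type*} [MeasureSpace Ω] [IsProbabilityMeasure (ℙ : Measure Ω)]
    {d : ℕ} (hd : 1 ≤ d)
    (R : Fin d → Ω → ℝ) (hmeas : ∀ j, Measurable (R j))
    (hindep : iIndepFun R ℙ)
    (α : ℝ)
    (L : ℝ → ℝ) (hLpos : ∀ x > (0:ℝ), 0 < L x) (hL : SlowlyVarying L)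
    (c : Fin d → ℝ)
    (htail : ∀ j, Tendsto (fun x => (ℙ {ω | |R j ω| > x}).toReal / (x ^ (-α) * L x))
      atTop (nhds (c j))) :
    Tendsto (fun x =>
        (ℙ {ω | Real.sqrt (∑ j, (R j ω) ^ 2) > x}).toReal / (x ^ (-α) * L x))
      atTop (nhds (∑ j, c j)) := by
  have : Nonempty (Fin d) := ⟨⟨0, hd⟩⟩
  set μ : Measure Ω := ℙ
  refine hL.tendsto_div_of_tail_bounds hLpos (k := d)
    (T := fun y => ∑ j, μ.real {ω | y < |R j ω|}) ?_ ?_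
    (sum_div_one_add_sum_le_measureReal_sqrt_gt hmeas hindep) fun ε hε x hx => ?_
  · simpa using tendsto_finsetSum univ fun j _ => tendsto_measureReal_lt_atTop μ (hmeas j).abs
  · have h := tendsto_finsetSum univ fun j _ => htail j
    simp only [← sum_div] at h
    exact h
  · have h := measureReal_sqrt_gt_le (fun i j hij => hindep.indepFun hij)
      (mul_nonneg hε.le hx.le) x
    rwa [Fintype.card_fin, show x - d * (ε * x) = (1 - d * ε) * x by ring] at h

theorem stmt18
    {Ω : Type*} [MeasureSpace Ω] [IsProbabilityMeasure (ℙ : Measure Ω)]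
    {d : ℕ} (hd : 1 ≤ d)
    (R : Fin d → Ω → ℝ) (hmeas : ∀ j, Measurable (R j))
    (hindep : iIndepFun R ℙ)
    (α : ℝ) (hα : 0 < α)
    (L : ℝ → ℝ) (hLpos : ∀ x > (0:ℝ), 0 < L x) (hL : SlowlyVarying L)
    (c : Fin d → ℝ) (hcnn : ∀ j, 0 ≤ c j) (hcpos : ∃ j, 0 < c j)
    (htail : ∀ j, Tendsto (fun x => (ℙ {ω | |R j ω| > x}).toReal / (x ^ (-α) * L x))
      atTop (nhds (c j))) :
    Tendsto (fun x =>
        (ℙ {ω | Real.sqrt (∑ j, (R j ω) ^ 2) > x}).toReal / (x ^ (-α) * L x))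
      atTop (nhds (∑ j, c j)) :=
  stmt18_general hd R hmeas hindep α L hLpos hL c htail
end
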